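/- arXiv:2502.04168 — 2 statements merged into one kernel-verified Lean document; each statement's English description precedes it below -/
import Mathlib

section
/- Parallel composition of post-selected teleportation protocols: let (T₁,E₁) be a post-selected teleportation protocol on finite types A₁, B₁ with success probability p₁, and (T₂,E₂) one on A₂, B₂ with success probability p₂. Define T ∈ Matrix ((A₁ × A₂) × (B₁ × B₂)) ((A₁ × A₂) × (B₁ × B₂)) ℂ by T(((a₁,a₂),(b₁,b₂)),((a₁',a₂'),(b₁',b₂'))) = T₁((a₁,b₁),(a₁',b₁')) · T₂((a₂,b₂),(a₂',b₂')), and E ∈ Matrix ((B₁ × B₂) × (A₁ × A₂)) ((B₁ × B₂) × (A₁ × A₂)) ℂ by E(((b₁,b₂),(c₁,c₂)),((b₁',b₂'),(c₁',c₂'))) = E₁((b₁,c₁),(b₁',c₁')) · E₂((b₂,c₂),(b₂',c₂')). Then (T,E) is a post-selected teleportation protocol on A = A₁ × A₂, B = B₁ × B₂ with success probability p₁ · p₂. -/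
open scoped BigOperators ComplexOrder

/-- The map `Φ_{T,E}` sending `ρ` on system `A` to the partial trace over `A` and `B`
of `T · (ρ ⊗ E)`, where `T` acts on `A ⊗ B` and `E` on `B ⊗ C` with `C ≅ A`. -/
noncomputable def teleMap {A B : Type*} [Fintype A] [Fintype B]
    (T : Matrix (A × B) (A × B) ℂ) (E : Matrix (B × A) (B × A) ℂ)
    (ρ : Matrix A A ℂ) : Matrix A A ℂ :=
  Matrix.of fun c c' => ∑ a : A, ∑ a' : A, ∑ b : B, ∑ b' : B,
    T (a, b) (a', b') * ρ a' a * E (b', c) (b, c')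

/-- A density matrix: positive semidefinite with trace one. -/
def IsDensityMatrix {A : Type*} [Fintype A] (ρ : Matrix A A ℂ) : Prop :=
  ρ.PosSemidef ∧ ρ.trace = 1

/-- A POVM element: positive semidefinite and below the identity. -/
def IsPOVMElement {A : Type*} [Fintype A] [DecidableEq A] (T : Matrix A A ℂ) : Prop :=
  T.PosSemidef ∧ (1 - T).PosSemidef

/-- `(T, E)` is a post-selected teleportation protocol with success probability `p ∈ (0,1]`. -/
def IsPSTeleportation {A B : Type*} [Fintype A] [Fintype B] [DecidableEq A] [DecidableEq B]
    (T : Matrix (A × B) (A × B) ℂ) (E : Matrix (B × A) (B × A) ℂ) (p : ℝ) : Prop :=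
  IsPOVMElement T ∧ IsDensityMatrix E ∧ 0 < p ∧ p ≤ 1 ∧
    ∀ ρ : Matrix A A ℂ, IsDensityMatrix ρ → teleMap T E ρ = (p : ℂ) • ρ

open Matrix Kronecker

/-! ### Auxiliary material -/

noncomputable def teleMapL {A B : Type*} [Fintype A] [Fintype B]
    (T : Matrix (A × B) (A × B) ℂ) (E : Matrix (B × A) (B × A) ℂ) :
    Matrix A A ℂ →ₗ[ℂ] Matrix A A ℂ where
  toFun := teleMap T E
  map_add' ρ σ := by
    ext c c'
    simp [teleMap, Matrix.add_apply, mul_add, add_mul, Finset.sum_add_distrib]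
  map_smul' r ρ := by
    ext c c'
    simp [teleMap, Matrix.smul_apply, smul_eq_mul, Finset.mul_sum,
      mul_assoc, mul_left_comm, mul_comm]

@[simp] lemma teleMapL_apply {A B : Type*} [Fintype A] [Fintype B]
    (T : Matrix (A × B) (A × B) ℂ) (E : Matrix (B × A) (B × A) ℂ) (ρ : Matrix A A ℂ) :
    teleMapL T E ρ = teleMap T E ρ := rfl

lemma smul_posSemidef {n : Type*} [Fintype n] {M : Matrix n n ℂ}
    (hM : M.PosSemidef) {c : ℝ} (hc : 0 ≤ c) : ((c : ℂ) • M).PosSemidef := by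
  rw [posSemidef_iff_dotProduct_mulVec] at hM ⊢
  constructor
  · unfold Matrix.IsHermitian
    rw [conjTranspose_smul, hM.1]
    simp [Complex.conj_ofReal]
  · intro x
    rw [smul_mulVec, dotProduct_smul, smul_eq_mul]
    exact mul_nonneg (by exact_mod_cast Complex.zero_le_real.mpr hc) (hM.2 x)

lemma posSemidef_outer {n : Type*} [Fintype n] (v : n → ℂ) :
    (Matrix.vecMulVec v (star v)).PosSemidef := by
  have h : Matrix.vecMulVec v (star v) = (Matrix.replicateCol Unit v) * (Matrix.replicateCol Unit v)ᴴ := by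
    ext i j
    simp [Matrix.vecMulVec_apply, Matrix.mul_apply, Matrix.replicateCol_apply, Matrix.conjTranspose_apply]
  rw [h]
  exact posSemidef_self_mul_conjTranspose _

lemma trace_outer {n : Type*} [Fintype n] (v : n → ℂ) :
    (Matrix.vecMulVec v (star v)).trace = ((∑ i, Complex.normSq (v i) : ℝ) : ℂ) := by
  simp [Matrix.trace, Matrix.diag, Matrix.vecMulVec_apply, Complex.mul_conj]

lemma std_decomp {n : Type*} [Fintype n] [DecidableEq n] (a a' : n) :
    Matrix.single a a' (1 : ℂ) =
      (1/2 : ℂ) • Matrix.vecMulVec (fun i => (if i = a then 1 else 0) + (if i = a' then 1 else 0) : n → ℂ)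
          (star (fun i => (if i = a then 1 else 0) + (if i = a' then 1 else 0) : n → ℂ))
      + (Complex.I/2) • Matrix.vecMulVec (fun i => (if i = a then 1 else 0) + Complex.I * (if i = a' then 1 else 0) : n → ℂ)
          (star (fun i => (if i = a then 1 else 0) + Complex.I * (if i = a' then 1 else 0) : n → ℂ))
      - ((1+Complex.I)/2) • Matrix.vecMulVec (fun i => if i = a then 1 else 0 : n → ℂ)
          (star (fun i => if i = a then 1 else 0 : n → ℂ))
      - ((1+Complex.I)/2) • Matrix.vecMulVec (fun i => if i = a' then 1 else 0 : n → ℂ)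
          (star (fun i => if i = a' then 1 else 0 : n → ℂ)) := by
  ext i j
  simp only [Matrix.single, Matrix.sub_apply, Matrix.add_apply, Matrix.smul_apply,
    Matrix.vecMulVec_apply, Pi.star_apply, Matrix.of_apply, smul_eq_mul,
    star_add, star_mul', star_one, star_zero, Complex.star_def, Complex.conj_I]
  by_cases hia : i = a <;> by_cases hja' : j = a' <;> by_cases hia' : i = a' <;>
    by_cases hja : j = a <;> simp_all [eq_comm] <;> ring_nf <;>
    first
      | rfl
      | (rw [show (3:ℕ) = 2 + 1 from rfl, pow_succ, Complex.I_sq]; ring)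
      | (rw [Complex.I_sq]; ring)

/-- Linearity: the teleportation map is determined by its values on standard basis matrices. -/
lemma teleMap_eq_smul_of_std {A B : Type*} [Fintype A] [Fintype B] [DecidableEq A]
    (T : Matrix (A × B) (A × B) ℂ) (E : Matrix (B × A) (B × A) ℂ) (q : ℂ)
    (hstd : ∀ a a' : A,
      teleMap T E (Matrix.single a a' (1:ℂ)) = q • Matrix.single a a' 1)
    (ρ : Matrix A A ℂ) : teleMap T E ρ = q • ρ := by
  conv_lhs => rw [matrix_eq_sum_single ρ]
  conv_rhs => rw [matrix_eq_sum_single ρ]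
  rw [show teleMap T E = ⇑(teleMapL T E) from rfl]
  simp only [map_sum, Finset.smul_sum]
  refine Finset.sum_congr rfl fun a _ => Finset.sum_congr rfl fun a' _ => ?_
  rw [show single a a' (ρ a a') = ρ a a' • single a a' (1:ℂ) by
      rw [smul_single, smul_eq_mul, mul_one], _root_.map_smul]
  rw [teleMapL_apply, hstd, smul_comm]

/-- The teleportation identity extends from density matrices to all matrices. -/
lemma teleMap_eq_smul_of_density {A B : Type*} [Fintype A] [Fintype B] [DecidableEq A]
    (T : Matrix (A × B) (A × B) ℂ) (E : Matrix (B × A) (B × A) ℂ) (p : ℝ)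
    (h : ∀ ρ, IsDensityMatrix ρ → teleMap T E ρ = (p : ℂ) • ρ)
    (ρ : Matrix A A ℂ) : teleMap T E ρ = (p : ℂ) • ρ := by
  have houter : ∀ v : A → ℂ,
      teleMap T E (vecMulVec v (star v)) = (p:ℂ) • vecMulVec v (star v) := by
    intro v
    by_cases hv : v = 0
    · subst hv
      have h0 : vecMulVec (0 : A → ℂ) (star (0 : A → ℂ)) = 0 := by
        ext i j; simp [vecMulVec_apply]
      rw [h0, show teleMap T E 0 = (teleMapL T E) 0 from rfl, map_zero, smul_zero]
    · set t : ℝ := ∑ i, Complex.normSq (v i) with ht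
      have ht0 : 0 < t := by
        obtain ⟨i, hi⟩ := Function.ne_iff.mp hv
        exact Finset.sum_pos' (fun _ _ => Complex.normSq_nonneg _)
          ⟨i, Finset.mem_univ i, Complex.normSq_pos.mpr hi⟩
      set ρ₀ : Matrix A A ℂ := ((t⁻¹ : ℝ) : ℂ) • vecMulVec v (star v) with hρ₀def
      have hρ₀ : IsDensityMatrix ρ₀ := by
        refine ⟨smul_posSemidef (posSemidef_outer v) (inv_nonneg.mpr ht0.le), ?_⟩
        rw [hρ₀def, Matrix.trace_smul, trace_outer, ← ht, smul_eq_mul]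
        norm_cast
        exact inv_mul_cancel₀ ht0.ne'
      have hvt : vecMulVec v (star v) = ((t : ℝ) : ℂ) • ρ₀ := by
        rw [hρ₀def, smul_smul, ← Complex.ofReal_mul, mul_inv_cancel₀ ht0.ne',
          Complex.ofReal_one, one_smul]
      rw [hvt, show teleMap T E (((t:ℝ):ℂ) • ρ₀) = ((t:ℝ):ℂ) • teleMap T E ρ₀ from
        (teleMapL T E).map_smul _ _, h ρ₀ hρ₀, smul_comm]
  refine teleMap_eq_smul_of_std T E _ (fun a a' => ?_) ρ
  rw [std_decomp a a',
    show teleMap T E = ⇑(teleMapL T E) from rfl, map_sub, map_sub, map_add,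
    _root_.map_smul, _root_.map_smul, _root_.map_smul, _root_.map_smul]
  simp only [teleMapL_apply, houter]
  module

lemma sum4 {α β γ δ : Type*} [Fintype α] [Fintype β] [Fintype γ] [Fintype δ]
    (f : α → β → γ → δ → ℂ) :
    ∑ a, ∑ b, ∑ c, ∑ d, f a b c d = ∑ x : α × β × γ × δ, f x.1 x.2.1 x.2.2.1 x.2.2.2 := by
  simp [Fintype.sum_prod_type]

lemma sum_sum_eq {α β : Type*} [Fintype α] [Fintype β] (g : α → β → ℂ) :
    ∑ a, ∑ b, g a b = ∑ x : α × β, g x.1 x.2 := by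
  rw [Fintype.sum_prod_type]

def shuffle (A₁ A₂ B₁ B₂ : Type*) :
    ((A₁ × A₂) × (A₁ × A₂) × (B₁ × B₂) × (B₁ × B₂)) ≃
      ((A₁ × A₁ × B₁ × B₁) × (A₂ × A₂ × B₂ × B₂)) where
  toFun x := ((x.1.1, x.2.1.1, x.2.2.1.1, x.2.2.2.1), (x.1.2, x.2.1.2, x.2.2.1.2, x.2.2.2.2))
  invFun y := ((y.1.1, y.2.1), (y.1.2.1, y.2.2.1), (y.1.2.2.1, y.2.2.2.1), (y.1.2.2.2, y.2.2.2.2))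
  left_inv _ := rfl
  right_inv _ := rfl

/-- The parallel teleportation map factors on product states. -/
lemma teleMap_prod {A₁ B₁ A₂ B₂ : Type*}
    [Fintype A₁] [Fintype B₁] [Fintype A₂] [Fintype B₂]
    (T₁ : Matrix (A₁ × B₁) (A₁ × B₁) ℂ) (E₁ : Matrix (B₁ × A₁) (B₁ × A₁) ℂ)
    (T₂ : Matrix (A₂ × B₂) (A₂ × B₂) ℂ) (E₂ : Matrix (B₂ × A₂) (B₂ × A₂) ℂ)
    (ρ₁ : Matrix A₁ A₁ ℂ) (ρ₂ : Matrix A₂ A₂ ℂ) :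
    teleMap
      (Matrix.of fun x y : (A₁ × A₂) × (B₁ × B₂) =>
        T₁ (x.1.1, x.2.1) (y.1.1, y.2.1) * T₂ (x.1.2, x.2.2) (y.1.2, y.2.2))
      (Matrix.of fun x y : (B₁ × B₂) × (A₁ × A₂) =>
        E₁ (x.1.1, x.2.1) (y.1.1, y.2.1) * E₂ (x.1.2, x.2.2) (y.1.2, y.2.2))
      (Matrix.of fun x y : A₁ × A₂ => ρ₁ x.1 y.1 * ρ₂ x.2 y.2)
    = Matrix.of fun c c' : A₁ × A₂ =>
        teleMap T₁ E₁ ρ₁ c.1 c'.1 * teleMap T₂ E₂ ρ₂ c.2 c'.2 := by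
  ext ⟨c₁, c₂⟩ ⟨c₁', c₂'⟩
  simp only [teleMap, Matrix.of_apply]
  rw [sum4, sum4, sum4, Finset.sum_mul_sum, sum_sum_eq]
  refine Fintype.sum_equiv (shuffle A₁ A₂ B₁ B₂) _ _ fun x => ?_
  obtain ⟨⟨a₁, a₂⟩, ⟨a₁', a₂'⟩, ⟨b₁, b₂⟩, ⟨b₁', b₂'⟩⟩ := x
  simp only [shuffle, Equiv.coe_fn_mk, Matrix.of_apply]
  ring

lemma kron_conjTranspose {m n : Type*} (M₁ : Matrix m m ℂ) (M₂ : Matrix n n ℂ) :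
    (M₁ ⊗ₖ M₂)ᴴ = M₁ᴴ ⊗ₖ M₂ᴴ := by
  ext ⟨i, j⟩ ⟨k, l⟩
  simp [Matrix.conjTranspose_apply, Matrix.kroneckerMap_apply]

lemma PosSemidef.kron {m n : Type*} [Fintype m] [Fintype n] [DecidableEq m] [DecidableEq n]
    {M₁ : Matrix m m ℂ} {M₂ : Matrix n n ℂ}
    (h₁ : M₁.PosSemidef) (h₂ : M₂.PosSemidef) : (M₁ ⊗ₖ M₂).PosSemidef := by
  exact Matrix.PosSemidef.kronecker h₁ h₂

lemma one_sub_kron {m n : Type*} [Fintype m] [Fintype n] [DecidableEq m] [DecidableEq n]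
    (M₁ : Matrix m m ℂ) (M₂ : Matrix n n ℂ) :
    (1 : Matrix (m × n) (m × n) ℂ) - M₁ ⊗ₖ M₂ =
      (1 - M₁) ⊗ₖ M₂ + (1 : Matrix m m ℂ) ⊗ₖ (1 - M₂) := by
  ext ⟨i, j⟩ ⟨k, l⟩
  simp only [Matrix.sub_apply, Matrix.add_apply, Matrix.kroneckerMap_apply,
    Matrix.one_apply, Prod.mk.injEq, ite_and]
  split_ifs <;> ring

lemma trace_submatrix_equiv' {m n : Type*} [Fintype m] [Fintype n] (e : m ≃ n)
    (M : Matrix n n ℂ) : (M.submatrix e e).trace = M.trace := by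
  simp only [Matrix.trace, Matrix.diag, Matrix.submatrix_apply]
  exact Fintype.sum_equiv e _ _ fun i => rfl

/-- The reshuffling equivalence between `(α × γ) × (β × δ)` and `(α × β) × (γ × δ)`. -/
def interEquiv (α β γ δ : Type*) : ((α × γ) × (β × δ)) ≃ ((α × β) × (γ × δ)) where
  toFun x := ((x.1.1, x.2.1), (x.1.2, x.2.2))
  invFun y := ((y.1.1, y.2.1), (y.1.2, y.2.2))
  left_inv _ := rfl
  right_inv _ := rfl

/-- the parallel composition of two post-selected teleportation
protocols is a post-selected teleportation protocol on the product systems, with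
success probability the product of the individual success probabilities. -/
theorem parallel_composition_of_ps_teleportation
    {A₁ B₁ A₂ B₂ : Type*}
    [Fintype A₁] [Fintype B₁] [Fintype A₂] [Fintype B₂]
    [DecidableEq A₁] [DecidableEq B₁] [DecidableEq A₂] [DecidableEq B₂]
    [Nonempty A₁] [Nonempty B₁] [Nonempty A₂] [Nonempty B₂]
    (T₁ : Matrix (A₁ × B₁) (A₁ × B₁) ℂ) (E₁ : Matrix (B₁ × A₁) (B₁ × A₁) ℂ) (p₁ : ℝ)
    (T₂ : Matrix (A₂ × B₂) (A₂ × B₂) ℂ) (E₂ : Matrix (B₂ × A₂) (B₂ × A₂) ℂ) (p₂ : ℝ)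
    (h₁ : IsPSTeleportation T₁ E₁ p₁) (h₂ : IsPSTeleportation T₂ E₂ p₂) :
    IsPSTeleportation
      (Matrix.of fun x y : (A₁ × A₂) × (B₁ × B₂) =>
        T₁ (x.1.1, x.2.1) (y.1.1, y.2.1) * T₂ (x.1.2, x.2.2) (y.1.2, y.2.2))
      (Matrix.of fun x y : (B₁ × B₂) × (A₁ × A₂) =>
        E₁ (x.1.1, x.2.1) (y.1.1, y.2.1) * E₂ (x.1.2, x.2.2) (y.1.2, y.2.2))
      (p₁ * p₂) := by
  obtain ⟨⟨hT₁, hT₁'⟩, ⟨hE₁psd, hE₁tr⟩, hp₁0, hp₁1, hmap₁⟩ := h₁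
  obtain ⟨⟨hT₂, hT₂'⟩, ⟨hE₂psd, hE₂tr⟩, hp₂0, hp₂1, hmap₂⟩ := h₂
  set eT := interEquiv A₁ B₁ A₂ B₂
  set eE := interEquiv B₁ A₁ B₂ A₂
  have heqT : (Matrix.of fun x y : (A₁ × A₂) × (B₁ × B₂) =>
      T₁ (x.1.1, x.2.1) (y.1.1, y.2.1) * T₂ (x.1.2, x.2.2) (y.1.2, y.2.2))
      = (T₁ ⊗ₖ T₂).submatrix ⇑eT ⇑eT := by
    ext ⟨⟨a₁, a₂⟩, ⟨b₁, b₂⟩⟩ ⟨⟨a₁', a₂'⟩, ⟨b₁', b₂'⟩⟩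
    rfl
  have heqE : (Matrix.of fun x y : (B₁ × B₂) × (A₁ × A₂) =>
      E₁ (x.1.1, x.2.1) (y.1.1, y.2.1) * E₂ (x.1.2, x.2.2) (y.1.2, y.2.2))
      = (E₁ ⊗ₖ E₂).submatrix ⇑eE ⇑eE := by
    ext ⟨⟨b₁, b₂⟩, ⟨c₁, c₂⟩⟩ ⟨⟨b₁', b₂'⟩, ⟨c₁', c₂'⟩⟩
    rfl
  refine ⟨⟨?_, ?_⟩, ⟨?_, ?_⟩, mul_pos hp₁0 hp₂0, ?_, ?_⟩
  · rw [heqT]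
    exact (PosSemidef.kron hT₁ hT₂).submatrix _
  · rw [heqT, ← Matrix.submatrix_one_equiv eT]
    have hsub : (1 : Matrix ((A₁ × B₁) × A₂ × B₂) _ ℂ).submatrix ⇑eT ⇑eT
        - (T₁ ⊗ₖ T₂).submatrix ⇑eT ⇑eT
        = ((1 : Matrix ((A₁ × B₁) × A₂ × B₂) _ ℂ) - T₁ ⊗ₖ T₂).submatrix ⇑eT ⇑eT := by
      ext x y
      simp [Matrix.submatrix_apply, Matrix.sub_apply, Matrix.one_apply,
        EmbeddingLike.apply_eq_iff_eq]
    rw [hsub, one_sub_kron]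
    exact (PosSemidef.add (PosSemidef.kron hT₁' hT₂) (PosSemidef.kron Matrix.PosSemidef.one hT₂')).submatrix _
  · rw [heqE]
    exact (PosSemidef.kron hE₁psd hE₂psd).submatrix _
  · rw [heqE, trace_submatrix_equiv', Matrix.trace_kronecker, hE₁tr, hE₂tr, one_mul]
  · nlinarith
  · intro ρ _
    refine teleMap_eq_smul_of_std _ _ _ (fun a a' => ?_) ρ
    obtain ⟨a₁, a₂⟩ := a
    obtain ⟨a₁', a₂'⟩ := a'
    have hsplit : ∀ (x₁ y₁ : A₁) (x₂ y₂ : A₂),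
        Matrix.single (x₁, x₂) (y₁, y₂) (1:ℂ) =
        Matrix.of fun x y : A₁ × A₂ =>
          Matrix.single x₁ y₁ (1:ℂ) x.1 y.1 * Matrix.single x₂ y₂ (1:ℂ) x.2 y.2 := by
      intro x₁ y₁ x₂ y₂
      ext ⟨i₁, i₂⟩ ⟨j₁, j₂⟩
      simp only [Matrix.single, Matrix.of_apply, Prod.mk.injEq]
      split_ifs <;> simp_all
    rw [hsplit, teleMap_prod]
    simp only [teleMap_eq_smul_of_density T₁ E₁ p₁ hmap₁,
      teleMap_eq_smul_of_density T₂ E₂ p₂ hmap₂]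
    ext ⟨c₁, c₂⟩ ⟨c₁', c₂'⟩
    simp only [Matrix.of_apply, Matrix.smul_apply, smul_eq_mul]
    push_cast
    ring
end

section
/- Cyclic composition is independent of the post-selected teleportation implementation: let (T,E) be a post-selected teleportation protocol on finite types A, B with success probability p ∈ (0,1], and let M : Matrix A A ℂ →ₗ[ℂ] Matrix A A ℂ be any linear map. Let N ∈ Matrix (B × A) (B × A) ℂ be the result of applying M to the second (C ≅ A) factor of E, defined by N((b,a),(b',a')) = Σ_{c,c'} E((b,c),(b',c')) · (M(E_{c c'}))(a,a'), where E_{c c'} denotes the matrix unit. Then Σ_{a,b,a',b'} T((a,b),(a',b')) · N((b',a'),(b,a)) = p · selfcycle(M), where selfcycle(M) = Σ_{k,l ∈ A} (M(E_{k l}))(k,l). -/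
open scoped BigOperators ComplexOrder

/-! ### Auxiliary lemmas -/

lemma rankOne_posSemidef {n : Type*} [Fintype n] (v : n → ℂ) :
    (Matrix.of fun i j => v i * star (v j)).PosSemidef := by
  have h : (Matrix.of fun i j => v i * star (v j)) =
      (Matrix.replicateCol Unit v) * (Matrix.replicateCol Unit v).conjTranspose := by
    ext i j
    simp [Matrix.mul_apply, Matrix.replicateCol, Matrix.conjTranspose_apply]
  rw [h]
  exact Matrix.posSemidef_self_mul_conjTranspose _

lemma rankOne_density {n : Type*} [Fintype n] (v : n → ℂ)
    (hv : (∑ i : n, v i * star (v i)) = 1) :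
    IsDensityMatrix (Matrix.of fun i j => v i * star (v j)) :=
  ⟨rankOne_posSemidef v, by simpa [Matrix.trace, Matrix.diag] using hv⟩

set_option linter.unusedSectionVars false in
lemma stdBasis_decomp {A : Type*} [Fintype A] [DecidableEq A]
    (a : ℂ) (ha : a * a = 1/2) (hs : star a = a) {k l : A} (hkl : k ≠ l) :
    Matrix.single k l (1 : ℂ) =
      (Matrix.of fun i j =>
          (if k = i then a else if l = i then a else 0) *
          star (if k = j then a else if l = j then a else 0))
      + Complex.I • (Matrix.of fun i j =>
          (if k = i then a else if l = i then Complex.I * a else 0) *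
          star (if k = j then a else if l = j then Complex.I * a else 0))
      - ((1 + Complex.I)/2) • (Matrix.single k k (1:ℂ) + Matrix.single l l (1:ℂ)) := by
  have hsI : star Complex.I = -Complex.I := by
    rw [Complex.star_def, Complex.conj_I]
  have hlk : l ≠ k := hkl.symm
  ext i j
  by_cases hik : k = i <;> by_cases hil : l = i <;> by_cases hjk : k = j <;> by_cases hjl : l = j <;>
    simp_all [Matrix.single, Matrix.of_apply, Matrix.add_apply, Matrix.sub_apply,
      Matrix.smul_apply, smul_eq_mul, star_mul', star_zero] <;>
    first
      | ring1
      | linear_combination (2:ℂ) * ha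
      | linear_combination (-2:ℂ) * ha
      | linear_combination (1 + Complex.I) * ha
      | linear_combination (-(1:ℂ) - Complex.I) * ha
      | linear_combination Complex.I * ha
      | linear_combination (-Complex.I) * ha
      | linear_combination (2*Complex.I) * ha
      | linear_combination (-2*Complex.I) * ha
      | linear_combination (-(1:ℂ)) * ha + a^2 * Complex.I_sq
      | linear_combination ha - a^2 * Complex.I_sq
      | linear_combination ha + a^2 * Complex.I_sq
      | linear_combination (-(1:ℂ)) * ha - a^2 * Complex.I_sq
      | linear_combination Complex.I * ha + Complex.I * a^2 * Complex.I_sq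
      | linear_combination (-Complex.I) * ha - Complex.I * a^2 * Complex.I_sq
      | linear_combination Complex.I * ha - Complex.I * a^2 * Complex.I_sq
      | linear_combination (-Complex.I) * ha + Complex.I * a^2 * Complex.I_sq
      | linear_combination (1 + Complex.I) * ha + a^2 * Complex.I_sq
      | linear_combination (-(1:ℂ) - Complex.I) * ha - a^2 * Complex.I_sq
      | linear_combination (1 + Complex.I) * ha + Complex.I * a^2 * Complex.I_sq
      | linear_combination (-(1:ℂ) - Complex.I) * ha - Complex.I * a^2 * Complex.I_sq

lemma teleMap_add {A B : Type*} [Fintype A] [Fintype B]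
    (T : Matrix (A × B) (A × B) ℂ) (E : Matrix (B × A) (B × A) ℂ)
    (ρ σ : Matrix A A ℂ) :
    teleMap T E (ρ + σ) = teleMap T E ρ + teleMap T E σ := by
  ext c c'
  simp [teleMap, Matrix.add_apply, mul_add, add_mul, Finset.sum_add_distrib]

lemma teleMap_smul {A B : Type*} [Fintype A] [Fintype B]
    (T : Matrix (A × B) (A × B) ℂ) (E : Matrix (B × A) (B × A) ℂ)
    (r : ℂ) (ρ : Matrix A A ℂ) :
    teleMap T E (r • ρ) = r • teleMap T E ρ := by
  ext c c'
  simp only [teleMap, Matrix.of_apply, Matrix.smul_apply, smul_eq_mul, Finset.mul_sum]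
  refine Finset.sum_congr rfl fun a _ => Finset.sum_congr rfl fun a' _ =>
    Finset.sum_congr rfl fun b _ => Finset.sum_congr rfl fun b' _ => by ring

lemma sum_rearrange6 {A B : Type*} [Fintype A] [Fintype B] (f : A → B → A → B → A → A → ℂ) :
    (∑ a : A, ∑ b : B, ∑ a' : A, ∑ b' : B, ∑ c : A, ∑ c' : A, f a b a' b' c c') =
      ∑ c : A, ∑ c' : A, ∑ a : A, ∑ a' : A, ∑ b : B, ∑ b' : B, f a b a' b' c c' := by
  conv_lhs => enter [2, a, 2, b, 2, a']; rw [Finset.sum_comm]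
  conv_lhs => enter [2, a, 2, b]; rw [Finset.sum_comm]
  conv_lhs => enter [2, a]; rw [Finset.sum_comm]
  rw [Finset.sum_comm]
  conv_lhs => enter [2, c, 2, a, 2, b, 2, a']; rw [Finset.sum_comm]
  conv_lhs => enter [2, c, 2, a, 2, b]; rw [Finset.sum_comm]
  conv_lhs => enter [2, c, 2, a]; rw [Finset.sum_comm]
  conv_lhs => enter [2, c]; rw [Finset.sum_comm]
  conv_lhs => enter [2, c, 2, c', 2, a]; rw [Finset.sum_comm]

/-- cyclic composition is independent of the post-selected
teleportation implementation: `Tr_{AB}[T · (id_B ⊗ M)(E)] = p · selfcycle(M)`,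
where `selfcycle(M) = ∑ k l, (M(E_{kl})) k l`. -/
theorem cyclic_composition_indep_of_implementation
    {A B : Type*} [Fintype A] [Fintype B] [DecidableEq A] [DecidableEq B]
    [Nonempty A] [Nonempty B]
    (T : Matrix (A × B) (A × B) ℂ) (E : Matrix (B × A) (B × A) ℂ) (p : ℝ)
    (h : IsPSTeleportation T E p)
    (M : Matrix A A ℂ →ₗ[ℂ] Matrix A A ℂ)
    (N : Matrix (B × A) (B × A) ℂ)
    (hN : ∀ (b : B) (a : A) (b' : B) (a' : A),
      N (b, a) (b', a') =
        ∑ c : A, ∑ c' : A,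
          E (b, c) (b', c') * (M (Matrix.single c c' 1)) a a') :
    (∑ a : A, ∑ b : B, ∑ a' : A, ∑ b' : B, T (a, b) (a', b') * N (b', a') (b, a))
      = (p : ℂ) * ∑ k : A, ∑ l : A, (M (Matrix.single k l 1)) k l := by
  obtain ⟨-, -, -, -, hmap⟩ := h
  -- `teleMap T E` as a linear map
  let L : Matrix A A ℂ →ₗ[ℂ] Matrix A A ℂ :=
    { toFun := teleMap T E
      map_add' := teleMap_add T E
      map_smul' := teleMap_smul T E }
  have hL : ∀ ρ : Matrix A A ℂ, L ρ = teleMap T E ρ := fun _ => rfl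
  -- the teleportation identity on normalized rank-one matrices
  have hDv : ∀ w : A → ℂ, (∑ i : A, w i * star (w i)) = 1 →
      teleMap T E (Matrix.of fun i j => w i * star (w j)) =
        (p : ℂ) • (Matrix.of fun i j => w i * star (w j)) := fun w hw =>
    hmap _ (rankOne_density w hw)
  -- the normalization constant
  set q : ℂ := (Real.sqrt 2 : ℂ)⁻¹ with hq_def
  have hs : star q = q := by
    simp [hq_def, Complex.star_def, map_inv₀, Complex.conj_ofReal]
  have hqq : q * q = 1/2 := by
    rw [hq_def, ← mul_inv, ← Complex.ofReal_mul, Real.mul_self_sqrt (by norm_num : (0:ℝ) ≤ 2)]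
    norm_num
  -- diagonal matrix units
  have hdiag : ∀ k : A, teleMap T E (Matrix.single k k 1) =
      (p:ℂ) • Matrix.single k k 1 := by
    intro k
    have hw : (∑ i : A, (if k = i then (1:ℂ) else 0) * star (if k = i then (1:ℂ) else 0)) = 1 := by
      simp [Finset.sum_ite_eq]
    have hd := hDv (fun i => if k = i then 1 else 0) hw
    have heq : (Matrix.of fun i j =>
        (if k = i then (1:ℂ) else 0) * star (if k = j then (1:ℂ) else 0))
        = Matrix.single k k 1 := by
      ext i j
      by_cases h1 : k = i <;> by_cases h2 : k = j <;>
        simp [Matrix.single, h1, h2]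
    rw [heq] at hd
    exact hd
  -- all matrix units
  have hbasis : ∀ k l : A, teleMap T E (Matrix.single k l 1) =
      (p:ℂ) • Matrix.single k l 1 := by
    intro k l
    by_cases hkl : k = l
    · subst hkl; exact hdiag k
    · have hw1 : (∑ i : A, (if k = i then q else if l = i then q else 0) *
          star (if k = i then q else if l = i then q else 0)) = 1 := by
        have hterm : ∀ i : A, (if k = i then q else if l = i then q else 0) *
            star (if k = i then q else if l = i then q else 0)
            = (if k = i then (1/2 : ℂ) else 0) + (if l = i then (1/2:ℂ) else 0) := by
          intro i
          by_cases h1 : k = i <;> by_cases h2 : l = i <;>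
            simp_all [hs] <;> linear_combination hqq
        rw [Finset.sum_congr rfl fun i _ => hterm i]
        rw [Finset.sum_add_distrib]
        simp [Finset.sum_ite_eq]
        norm_num
      have hw2 : (∑ i : A, (if k = i then q else if l = i then Complex.I * q else 0) *
          star (if k = i then q else if l = i then Complex.I * q else 0)) = 1 := by
        have hsI : star Complex.I = -Complex.I := by
          rw [Complex.star_def, Complex.conj_I]
        have hterm : ∀ i : A, (if k = i then q else if l = i then Complex.I * q else 0) *
            star (if k = i then q else if l = i then Complex.I * q else 0)
            = (if k = i then (1/2 : ℂ) else 0) + (if l = i then (1/2:ℂ) else 0) := by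
          intro i
          by_cases h1 : k = i <;> by_cases h2 : l = i <;>
            simp_all [hs, star_mul'] <;>
            first
              | linear_combination hqq
              | linear_combination Complex.I * q^2 * Complex.I_sq - Complex.I^2 * hqq
              | linear_combination -Complex.I^2 * hqq + (1/2) * Complex.I_sq
              | linear_combination hqq - q^2 * Complex.I_sq
              | linear_combination hqq + q^2 * Complex.I_sq
        rw [Finset.sum_congr rfl fun i _ => hterm i]
        rw [Finset.sum_add_distrib]
        simp [Finset.sum_ite_eq]
        norm_num
      have hd1 := hDv _ hw1
      have hd2 := hDv _ hw2
      rw [stdBasis_decomp q hqq hs hkl]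
      rw [show teleMap T E _ = L _ from rfl]
      rw [map_sub, map_add, map_smul, map_smul, map_add]
      rw [hL, hL, hL, hL, hd1, hd2, hdiag k, hdiag l]
      ext i j
      simp only [Matrix.add_apply, Matrix.sub_apply, Matrix.smul_apply, smul_eq_mul]
      ring
  -- teleMap acts as scaling by p on every matrix
  have key : ∀ σ : Matrix A A ℂ, teleMap T E σ = (p:ℂ) • σ := by
    intro σ
    have hexp : σ = ∑ k : A, ∑ l : A, σ k l • Matrix.single k l (1:ℂ) := by
      conv_lhs => rw [Matrix.matrix_eq_sum_single σ]
      refine Finset.sum_congr rfl fun k _ => Finset.sum_congr rfl fun l _ => ?_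
      rw [Matrix.smul_single, smul_eq_mul, mul_one]
    calc teleMap T E σ = L σ := rfl
      _ = ∑ k : A, ∑ l : A, σ k l • L (Matrix.single k l 1) := by
          conv_lhs => rw [hexp]
          rw [map_sum]
          refine Finset.sum_congr rfl fun k _ => ?_
          rw [map_sum]
          exact Finset.sum_congr rfl fun l _ => map_smul L _ _
      _ = ∑ k : A, ∑ l : A, σ k l • ((p:ℂ) • Matrix.single k l 1) := by
          refine Finset.sum_congr rfl fun k _ => Finset.sum_congr rfl fun l _ => ?_
          rw [hL, hbasis]
      _ = (p:ℂ) • σ := by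
          conv_rhs => rw [hexp]
          rw [Finset.smul_sum]
          refine Finset.sum_congr rfl fun k _ => ?_
          rw [Finset.smul_sum]
          exact Finset.sum_congr rfl fun l _ => smul_comm _ _ _
  -- rewrite the left-hand side as a sum of teleMap entries
  have hmain : (∑ a : A, ∑ b : B, ∑ a' : A, ∑ b' : B, T (a, b) (a', b') * N (b', a') (b, a))
      = ∑ c : A, ∑ c' : A, teleMap T E (M (Matrix.single c c' 1)) c c' := by
    simp only [hN, Finset.mul_sum]
    rw [sum_rearrange6 (fun a b a' b' c c' =>
      T (a, b) (a', b') * (E (b', c) (b, c') * (M (Matrix.single c c' 1)) a' a))]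
    refine Finset.sum_congr rfl fun c _ => Finset.sum_congr rfl fun c' _ => ?_
    simp only [teleMap, Matrix.of_apply]
    refine Finset.sum_congr rfl fun a _ => Finset.sum_congr rfl fun a' _ =>
      Finset.sum_congr rfl fun b _ => Finset.sum_congr rfl fun b' _ => by ring
  rw [hmain]
  rw [Finset.mul_sum]
  refine Finset.sum_congr rfl fun c _ => ?_
  rw [Finset.mul_sum]
  refine Finset.sum_congr rfl fun c' _ => ?_
  rw [key, Matrix.smul_apply, smul_eq_mul]
end
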